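/- Let P be a symmetric positive definite solution of the ARE, set A₋ = A − BR⁻¹BᵀP, and assume there are M ≥ 1 and ν > 0 with ‖exp(tA₋)‖ ≤ M e^{−νt} for all t ≥ 0. Fix z₀ ∈ ℝⁿ. Then: (a) the pair z_f(t) = exp(tA₋) z₀, v_f(t) = −R⁻¹BᵀP z_f(t) satisfies ż_f = A z_f + B v_f, z_f(0) = z₀, z_f(t) → 0 as t → ∞, and ½∫₀^∞ (‖z_f(t)‖²_Q + ‖v_f(t)‖²_R) dt = ½⟨P z₀, z₀⟩; (b) every pair (z, v) with z differentiable, v continuous, ż = Az + Bv, z(0) = z₀, z(t) → 0 as t → ∞ and t ↦ ‖z(t)‖²_Q + ‖v(t)‖²_R integrable on [0, ∞) satisfies ½∫₀^∞ (‖z(t)‖²_Q + ‖v(t)‖²_R) dt ≥ ½⟨P z₀, z₀⟩. -/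

import Mathlib

open Matrix MeasureTheory Filter Set Topology

/-!
Completing the square with the Riccati equation: along any solution of `ż = A z + B v`,
with `K = R⁻¹ Bᵀ P`,
`d/dt ⟨P z, z⟩ = ‖v + K z‖²_R - (‖z‖²_Q + ‖v‖²_R)`.
Integrating over `[0, T]` and letting `T → ∞` (so that `⟨P z(T), z(T)⟩ → 0`) shows that the cost
is `⟨P z₀, z₀⟩ + ∫ ‖v + K z‖²_R ≥ ⟨P z₀, z₀⟩`, with equality for the feedback `v = -K z`, whose
trajectory is `exp(t (A - B K)) z₀`.
-/

section Calculus

variable {𝕜 ι κ : Type*} [NontriviallyNormedField 𝕜] [Fintype ι]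
  {f g : 𝕜 → ι → 𝕜} {f' g' : ι → 𝕜} {s : Set 𝕜} {t : 𝕜}

theorem HasDerivWithinAt.dotProduct (hf : HasDerivWithinAt f f' s t)
    (hg : HasDerivWithinAt g g' s t) :
    HasDerivWithinAt (fun τ => f τ ⬝ᵥ g τ) (f' ⬝ᵥ g t + f t ⬝ᵥ g') s t :=
  (HasDerivWithinAt.fun_sum (u := Finset.univ) fun i _ =>
    (hasDerivWithinAt_pi.mp hf i).fun_mul (hasDerivWithinAt_pi.mp hg i)).congr_deriv
      Finset.sum_add_distrib

theorem HasDerivWithinAt.matrix_mulVec (P : Matrix κ ι 𝕜) (hf : HasDerivWithinAt f f' s t) :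
    HasDerivWithinAt (fun τ => P *ᵥ f τ) (P *ᵥ f') s t :=
  hasDerivWithinAt_pi.mpr fun i => by
    simp only [mulVec]
    exact HasDerivWithinAt.fun_sum fun j _ => (hasDerivWithinAt_pi.mp hf j).const_mul (P i j)

end Calculus

theorem hasDerivAt_exp_smul_mulVec {ι : Type*} [Fintype ι] [DecidableEq ι]
    (X : Matrix ι ι ℝ) (x : ι → ℝ) (t : ℝ) :
    HasDerivAt (fun s : ℝ => NormedSpace.exp (s • X) *ᵥ x)
      (X *ᵥ (NormedSpace.exp (t • X) *ᵥ x)) t := by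
  -- matrices carry no global norm; any normed-algebra structure yields the derivative of `exp`
  let := Matrix.linftyOpNormedRing (n := ι) (α := ℝ)
  let := Matrix.linftyOpNormedAlgebra (n := ι) (α := ℝ) (R := ℝ)
  rw [mulVec_mulVec]
  exact ((mulVecBilin ℝ ℝ).flip x).toContinuousLinearMap.hasFDerivAt.comp_hasDerivAt t
    (hasDerivAt_exp_smul_const' X t)

theorem norm_le_sqrt_dotProduct_self {ι : Type*} [Fintype ι] (x : ι → ℝ) :
    ‖x‖ ≤ √(x ⬝ᵥ x) :=
  (pi_norm_le_iff_of_nonneg (Real.sqrt_nonneg _)).mpr fun i => by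
    rw [Real.norm_eq_abs, ← Real.sqrt_sq_eq_abs]
    exact Real.sqrt_le_sqrt (Finset.single_le_sum (f := fun j => x j * x j)
      (fun j _ => mul_self_nonneg (x j)) (Finset.mem_univ i) |>.trans_eq' (sq (x i)).symm)

theorem tendsto_zero_of_sqrt_dotProduct_self_le_mul_exp {ι : Type*} [Fintype ι]
    {f : ℝ → ι → ℝ} {C ν : ℝ} (hν : 0 < ν)
    (hf : ∀ t, 0 ≤ t → √(f t ⬝ᵥ f t) ≤ C * Real.exp (-ν * t)) :
    Tendsto f atTop (𝓝 0) := by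
  have hexp : Tendsto (fun t => C * Real.exp (-ν * t)) atTop (𝓝 0) := by
    simpa using (Real.tendsto_exp_atBot.comp
      (tendsto_id.const_mul_atTop_of_neg (neg_lt_zero.mpr hν))).const_mul C
  refine squeeze_zero_norm' ?_ hexp
  filter_upwards [eventually_ge_atTop 0] with t ht
  exact (norm_le_sqrt_dotProduct_self _).trans (hf t ht)

theorem tendsto_mulVec_dotProduct_self_zero {ι : Type*} [Fintype ι] (P : Matrix ι ι ℝ)
    {z : ℝ → ι → ℝ} {l : Filter ℝ} (hz : Tendsto z l (𝓝 0)) :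
    Tendsto (fun t => P *ᵥ z t ⬝ᵥ z t) l (𝓝 0) := by
  have hcont : Continuous fun x : ι → ℝ => P *ᵥ x ⬝ᵥ x :=
    (continuous_const.matrix_mulVec continuous_id).dotProduct continuous_id
  exact (hcont.tendsto' 0 0 (by simp)).comp hz

section Riccati

variable {ι κ α : Type*} [Fintype ι] [Fintype κ] [CommRing α]

theorem Matrix.mulVec_dotProduct (M : Matrix ι κ α) (y : κ → α) (z : ι → α) :
    M *ᵥ y ⬝ᵥ z = y ⬝ᵥ Mᵀ *ᵥ z := by
  rw [dotProduct_comm, dotProduct_mulVec, mulVec_transpose, dotProduct_comm]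

theorem riccati_completing_square [DecidableEq κ] {A P Q : Matrix ι ι α} {B : Matrix ι κ α}
    {R : Matrix κ κ α} (hP : P.IsSymm) (hR : R.IsSymm) (hRdet : IsUnit R.det)
    (hARE : Aᵀ * P + P * A - P * B * R⁻¹ * Bᵀ * P = -Q) (x : ι → α) (u : κ → α) :
    P *ᵥ (A *ᵥ x + B *ᵥ u) ⬝ᵥ x + P *ᵥ x ⬝ᵥ (A *ᵥ x + B *ᵥ u) =
      R *ᵥ (u + (R⁻¹ * Bᵀ * P) *ᵥ x) ⬝ᵥ (u + (R⁻¹ * Bᵀ * P) *ᵥ x) -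
        (Q *ᵥ x ⬝ᵥ x + R *ᵥ u ⬝ᵥ u) := by
  set k := (R⁻¹ * Bᵀ * P) *ᵥ x
  have hPsymm (y : ι → α) : P *ᵥ y ⬝ᵥ x = y ⬝ᵥ P *ᵥ x := by rw [mulVec_dotProduct, hP.eq]
  have hk : R⁻¹ *ᵥ (Bᵀ *ᵥ (P *ᵥ x)) = k := by simp only [k, mulVec_mulVec, Matrix.mul_assoc]
  have hRk : R *ᵥ k = Bᵀ *ᵥ (P *ᵥ x) := by
    rw [← hk, mulVec_mulVec, mul_nonsing_inv _ hRdet, one_mulVec]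
  -- the Riccati equation as a quadratic form: `⟨Px, Ax⟩ + ⟨Ax, Px⟩ - ⟨k, Bᵀ P x⟩ = -⟨Qx, x⟩`
  have hscalar := congrArg (fun M => M *ᵥ x ⬝ᵥ x) hARE
  simp only [sub_mulVec, add_mulVec, neg_mulVec, ← mulVec_mulVec, sub_dotProduct,
    add_dotProduct, neg_dotProduct, hPsymm, hk] at hscalar
  rw [mulVec_dotProduct, transpose_transpose, mulVec_dotProduct B k] at hscalar
  simp only [mulVec_add, add_dotProduct, dotProduct_add, hPsymm, mulVec_dotProduct B u,
    mulVec_dotProduct R u, hR.eq, hRk]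
  have hBu : P *ᵥ x ⬝ᵥ B *ᵥ u = Bᵀ *ᵥ (P *ᵥ x) ⬝ᵥ u := by
    rw [dotProduct_comm, mulVec_dotProduct, dotProduct_comm]
  linear_combination hscalar + hBu + dotProduct_comm k (Bᵀ *ᵥ (P *ᵥ x))

end Riccati

theorem Matrix.PosSemidef.mulVec_dotProduct_self_nonneg {ι : Type*} [Fintype ι]
    {M : Matrix ι ι ℝ} (hM : M.PosSemidef) (x : ι → ℝ) : 0 ≤ M *ᵥ x ⬝ᵥ x := by
  simpa [dotProduct_comm] using hM.dotProduct_mulVec_nonneg x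

section Trajectories

variable {ι κ : Type*} [Fintype ι] [Fintype κ] [DecidableEq κ]
  {A P Q : Matrix ι ι ℝ} {B : Matrix ι κ ℝ} {R : Matrix κ κ ℝ}

theorem hasDerivWithinAt_mulVec_dotProduct_self_of_riccati (hP : P.IsSymm) (hR : R.IsSymm)
    (hRdet : IsUnit R.det) (hARE : Aᵀ * P + P * A - P * B * R⁻¹ * Bᵀ * P = -Q)
    {z : ℝ → ι → ℝ} {u : κ → ℝ} {s : Set ℝ} {t : ℝ}
    (hz : HasDerivWithinAt z (A *ᵥ z t + B *ᵥ u) s t) :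
    HasDerivWithinAt (fun τ => P *ᵥ z τ ⬝ᵥ z τ)
      (R *ᵥ (u + (R⁻¹ * Bᵀ * P) *ᵥ z t) ⬝ᵥ (u + (R⁻¹ * Bᵀ * P) *ᵥ z t) -
        (Q *ᵥ z t ⬝ᵥ z t + R *ᵥ u ⬝ᵥ u)) s t :=
  riccati_completing_square hP hR hRdet hARE (z t) u ▸ (hz.matrix_mulVec P).dotProduct hz

theorem integral_Ioi_cost_eq_of_riccati_feedback (hP : P.IsSymm) (hQ : Q.PosSemidef)
    (hR : R.PosSemidef) (hRdet : IsUnit R.det)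
    (hARE : Aᵀ * P + P * A - P * B * R⁻¹ * Bᵀ * P = -Q) {z : ℝ → ι → ℝ}
    (hz : ∀ t ∈ Ici (0 : ℝ), HasDerivAt z (A *ᵥ z t + B *ᵥ -((R⁻¹ * Bᵀ * P) *ᵥ z t)) t)
    (hlim : Tendsto z atTop (𝓝 0)) :
    ∫ t in Ioi (0 : ℝ), (Q *ᵥ z t ⬝ᵥ z t +
        R *ᵥ -((R⁻¹ * Bᵀ * P) *ᵥ z t) ⬝ᵥ -((R⁻¹ * Bᵀ * P) *ᵥ z t)) =
      P *ᵥ z 0 ⬝ᵥ z 0 := by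
  have hderiv : ∀ t ∈ Ici (0 : ℝ), HasDerivAt (fun τ => -(P *ᵥ z τ ⬝ᵥ z τ))
      (Q *ᵥ z t ⬝ᵥ z t + R *ᵥ -((R⁻¹ * Bᵀ * P) *ᵥ z t) ⬝ᵥ -((R⁻¹ * Bᵀ * P) *ᵥ z t)) t :=
    fun t ht => by
      have := (hasDerivWithinAt_univ.mp (hasDerivWithinAt_mulVec_dotProduct_self_of_riccati hP
        (isHermitian_iff_isSymm.mp hR.isHermitian) hRdet hARE (hz t ht).hasDerivWithinAt)).fun_neg
      rwa [neg_add_cancel, mulVec_zero, zero_dotProduct, zero_sub, neg_neg] at this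
  simpa using integral_Ioi_of_hasDerivAt_of_nonneg' hderiv
    (fun t _ => add_nonneg (hQ.mulVec_dotProduct_self_nonneg _)
      (hR.mulVec_dotProduct_self_nonneg _))
    (tendsto_mulVec_dotProduct_self_zero P hlim).neg

theorem mulVec_dotProduct_self_le_integral_Ioi_cost (hP : P.IsSymm) (hR : R.PosSemidef)
    (hRdet : IsUnit R.det) (hARE : Aᵀ * P + P * A - P * B * R⁻¹ * Bᵀ * P = -Q)
    {z : ℝ → ι → ℝ} {v : ℝ → κ → ℝ}
    (hz : ∀ t ∈ Ici (0 : ℝ), HasDerivWithinAt z (A *ᵥ z t + B *ᵥ v t) (Ici 0) t)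
    (hlim : Tendsto z atTop (𝓝 0))
    (hint : IntegrableOn (fun t => Q *ᵥ z t ⬝ᵥ z t + R *ᵥ v t ⬝ᵥ v t) (Ici 0)) :
    P *ᵥ z 0 ⬝ᵥ z 0 ≤ ∫ t in Ioi (0 : ℝ), (Q *ᵥ z t ⬝ᵥ z t + R *ᵥ v t ⬝ᵥ v t) := by
  have hvalue (t : ℝ) (ht : t ∈ Ici 0) := hasDerivWithinAt_mulVec_dotProduct_self_of_riccati hP
    (isHermitian_iff_isSymm.mp hR.isHermitian) hRdet hARE (hz t ht)
  have hfinite : ∀ T, 0 ≤ T → P *ᵥ z 0 ⬝ᵥ z 0 - P *ᵥ z T ⬝ᵥ z T ≤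
      ∫ t in (0 : ℝ)..T, (Q *ᵥ z t ⬝ᵥ z t + R *ᵥ v t ⬝ᵥ v t) := fun T hT => by
    have := intervalIntegral.sub_le_integral_of_hasDeriv_right_of_le hT
      (fun t ht => (hvalue t ht.1).continuousWithinAt.mono Icc_subset_Ici_self |>.fun_neg)
      (fun t ht => (hvalue t ht.1.le).mono (Ioi_subset_Ici ht.1.le) |>.fun_neg)
      (hint.mono_set Icc_subset_Ici_self)
      (fun t _ => by rw [neg_sub]; exact sub_le_self _ (hR.mulVec_dotProduct_self_nonneg _))
    linarith
  simpa using le_of_tendsto_of_tendsto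
    ((tendsto_mulVec_dotProduct_self_zero P hlim).const_sub _)
    (intervalIntegral_tendsto_integral_Ioi 0 (hint.mono_set Ioi_subset_Ici_self) tendsto_id)
    ((eventually_ge_atTop 0).mono hfinite)

end Trajectories

theorem forward_stabilization_optimal_general
    (n m : ℕ)
    (A : Matrix (Fin n) (Fin n) ℝ) (B : Matrix (Fin n) (Fin m) ℝ)
    (Q : Matrix (Fin n) (Fin n) ℝ) (hQ : Q.PosDef)
    (R : Matrix (Fin m) (Fin m) ℝ) (hR : R.PosDef)
    (P : Matrix (Fin n) (Fin n) ℝ) (hP : P.PosDef)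
    (hARE : Aᵀ * P + P * A - P * B * R⁻¹ * Bᵀ * P = -Q)
    (M ν : ℝ) (hν : 0 < ν)
    (hstab : ∀ t : ℝ, 0 ≤ t → ∀ x : Fin n → ℝ,
      Real.sqrt ((NormedSpace.exp (t • (A - B * R⁻¹ * Bᵀ * P))).mulVec x ⬝ᵥ
          (NormedSpace.exp (t • (A - B * R⁻¹ * Bᵀ * P))).mulVec x)
        ≤ M * Real.exp (-ν * t) * Real.sqrt (x ⬝ᵥ x))
    (z₀ : Fin n → ℝ) :
    -- (a) optimality of the feedback pair
    ((∀ t ∈ Set.Ici (0 : ℝ),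
        HasDerivWithinAt (fun s => (NormedSpace.exp (s • (A - B * R⁻¹ * Bᵀ * P))).mulVec z₀)
          (A.mulVec ((NormedSpace.exp (t • (A - B * R⁻¹ * Bᵀ * P))).mulVec z₀)
            + B.mulVec (-(R⁻¹ * Bᵀ * P).mulVec
                ((NormedSpace.exp (t • (A - B * R⁻¹ * Bᵀ * P))).mulVec z₀)))
          (Set.Ici 0) t) ∧
      (NormedSpace.exp ((0 : ℝ) • (A - B * R⁻¹ * Bᵀ * P))).mulVec z₀ = z₀ ∧
      Filter.Tendsto (fun t : ℝ => (NormedSpace.exp (t • (A - B * R⁻¹ * Bᵀ * P))).mulVec z₀)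
        Filter.atTop (nhds 0) ∧
      (1 / 2) * ∫ t in Set.Ioi (0 : ℝ),
          (Q.mulVec ((NormedSpace.exp (t • (A - B * R⁻¹ * Bᵀ * P))).mulVec z₀) ⬝ᵥ
              (NormedSpace.exp (t • (A - B * R⁻¹ * Bᵀ * P))).mulVec z₀
            + R.mulVec (-(R⁻¹ * Bᵀ * P).mulVec
                  ((NormedSpace.exp (t • (A - B * R⁻¹ * Bᵀ * P))).mulVec z₀)) ⬝ᵥ
                (-(R⁻¹ * Bᵀ * P).mulVec
                  ((NormedSpace.exp (t • (A - B * R⁻¹ * Bᵀ * P))).mulVec z₀)))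
        = (1 / 2) * (P.mulVec z₀ ⬝ᵥ z₀))
    ∧
    -- (b) the optimal value is a lower bound
    (∀ z : ℝ → Fin n → ℝ, ∀ v : ℝ → Fin m → ℝ,
      (∀ t ∈ Set.Ici (0 : ℝ),
        HasDerivWithinAt z (A.mulVec (z t) + B.mulVec (v t)) (Set.Ici 0) t) →
      ContinuousOn v (Set.Ici 0) →
      z 0 = z₀ →
      Filter.Tendsto z Filter.atTop (nhds 0) →
      IntegrableOn (fun t => Q.mulVec (z t) ⬝ᵥ z t + R.mulVec (v t) ⬝ᵥ v t) (Set.Ici 0) →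
      (1 / 2) * (P.mulVec z₀ ⬝ᵥ z₀)
        ≤ (1 / 2) * ∫ t in Set.Ioi (0 : ℝ),
            (Q.mulVec (z t) ⬝ᵥ z t + R.mulVec (v t) ⬝ᵥ v t)) := by
  have hPsymm : P.IsSymm := isHermitian_iff_isSymm.mp hP.isHermitian
  have hRdet : IsUnit R.det := hR.det_pos.ne'.isUnit
  have hclosed (y : Fin n → ℝ) :
      (A - B * R⁻¹ * Bᵀ * P) *ᵥ y = A *ᵥ y + B *ᵥ -((R⁻¹ * Bᵀ * P) *ᵥ y) := by
    rw [sub_mulVec, mulVec_neg, mulVec_mulVec, sub_eq_add_neg]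
    simp only [Matrix.mul_assoc]
  have hflow (t : ℝ) := hasDerivAt_exp_smul_mulVec (A - B * R⁻¹ * Bᵀ * P) z₀ t
  simp only [hclosed] at hflow
  have hdecay := tendsto_zero_of_sqrt_dotProduct_self_le_mul_exp hν fun t ht =>
    (hstab t ht z₀).trans_eq (mul_right_comm _ _ _)
  refine ⟨⟨fun t _ => (hflow t).hasDerivWithinAt, by simp, hdecay, ?_⟩, ?_⟩
  · rw [integral_Ioi_cost_eq_of_riccati_feedback hPsymm hQ.posSemidef hR.posSemidef hRdet hARE
      (fun t _ => hflow t) hdecay]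
    simp
  · intro z v hz _ hz0 hlim hint
    have := mulVec_dotProduct_self_le_integral_Ioi_cost hPsymm hR.posSemidef hRdet hARE hz hlim
      hint
    rw [hz0] at this
    linarith

/-- the Riccati feedback solves the forward stabilization problem with optimal
value `½⟨P z₀, z₀⟩`, and this value is a lower bound for all admissible pairs.
The operator norm bound `‖exp(tA₋)‖ ≤ M e^{-νt}` (Euclidean operator norm) is expressed
through the action on vectors, with the Euclidean norm written as `√(x ⬝ᵥ x)`. -/
theorem forward_stabilization_optimal
    (n m : ℕ) (hn : 1 ≤ n) (hm : 1 ≤ m)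
    (A : Matrix (Fin n) (Fin n) ℝ) (B : Matrix (Fin n) (Fin m) ℝ)
    (Q : Matrix (Fin n) (Fin n) ℝ) (hQ : Q.PosDef)
    (R : Matrix (Fin m) (Fin m) ℝ) (hR : R.PosDef)
    (P : Matrix (Fin n) (Fin n) ℝ) (hP : P.PosDef)
    (hARE : Aᵀ * P + P * A - P * B * R⁻¹ * Bᵀ * P = -Q)
    (M ν : ℝ) (hM : 1 ≤ M) (hν : 0 < ν)
    (hstab : ∀ t : ℝ, 0 ≤ t → ∀ x : Fin n → ℝ,
      Real.sqrt ((NormedSpace.exp (t • (A - B * R⁻¹ * Bᵀ * P))).mulVec x ⬝ᵥ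
          (NormedSpace.exp (t • (A - B * R⁻¹ * Bᵀ * P))).mulVec x)
        ≤ M * Real.exp (-ν * t) * Real.sqrt (x ⬝ᵥ x))
    (z₀ : Fin n → ℝ) :
    -- (a) optimality of the feedback pair
    ((∀ t ∈ Set.Ici (0 : ℝ),
        HasDerivWithinAt (fun s => (NormedSpace.exp (s • (A - B * R⁻¹ * Bᵀ * P))).mulVec z₀)
          (A.mulVec ((NormedSpace.exp (t • (A - B * R⁻¹ * Bᵀ * P))).mulVec z₀)
            + B.mulVec (-(R⁻¹ * Bᵀ * P).mulVec
                ((NormedSpace.exp (t • (A - B * R⁻¹ * Bᵀ * P))).mulVec z₀)))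
          (Set.Ici 0) t) ∧
      (NormedSpace.exp ((0 : ℝ) • (A - B * R⁻¹ * Bᵀ * P))).mulVec z₀ = z₀ ∧
      Filter.Tendsto (fun t : ℝ => (NormedSpace.exp (t • (A - B * R⁻¹ * Bᵀ * P))).mulVec z₀)
        Filter.atTop (nhds 0) ∧
      (1 / 2) * ∫ t in Set.Ioi (0 : ℝ),
          (Q.mulVec ((NormedSpace.exp (t • (A - B * R⁻¹ * Bᵀ * P))).mulVec z₀) ⬝ᵥ
              (NormedSpace.exp (t • (A - B * R⁻¹ * Bᵀ * P))).mulVec z₀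
            + R.mulVec (-(R⁻¹ * Bᵀ * P).mulVec
                  ((NormedSpace.exp (t • (A - B * R⁻¹ * Bᵀ * P))).mulVec z₀)) ⬝ᵥ
                (-(R⁻¹ * Bᵀ * P).mulVec
                  ((NormedSpace.exp (t • (A - B * R⁻¹ * Bᵀ * P))).mulVec z₀)))
        = (1 / 2) * (P.mulVec z₀ ⬝ᵥ z₀))
    ∧
    -- (b) the optimal value is a lower bound
    (∀ z : ℝ → Fin n → ℝ, ∀ v : ℝ → Fin m → ℝ,
      (∀ t ∈ Set.Ici (0 : ℝ),
        HasDerivWithinAt z (A.mulVec (z t) + B.mulVec (v t)) (Set.Ici 0) t) →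
      ContinuousOn v (Set.Ici 0) →
      z 0 = z₀ →
      Filter.Tendsto z Filter.atTop (nhds 0) →
      IntegrableOn (fun t => Q.mulVec (z t) ⬝ᵥ z t + R.mulVec (v t) ⬝ᵥ v t) (Set.Ici 0) →
      (1 / 2) * (P.mulVec z₀ ⬝ᵥ z₀)
        ≤ (1 / 2) * ∫ t in Set.Ioi (0 : ℝ),
            (Q.mulVec (z t) ⬝ᵥ z t + R.mulVec (v t) ⬝ᵥ v t)) :=
  forward_stabilization_optimal_general n m A B Q hQ R hR P hP hARE M ν hν hstab z₀
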